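/- With the notation of the paper (in particular $f_L(x) = \pi_L x + x^{q_L}$, $f_K(x) = \pi_K x + x^{q_K}$, $q_L \geq 3$, $\pi_K^2 \mid \pi_L$, and $\pi_L \mid \alpha$ where $\alpha = q_K/\pi_L^{f_{K/L}}$): define $T(f) = \big(\sum^{LT,L}_{z \in \mathfrak{F}_0(F_K)} f(x\oplus_K z)\big) \ominus_L [\alpha]_L(f([\pi_K]_K(x)))$ for $f \in \mathcal{O}_K[[x]]$ with $\pi_K \mid f(0)$. If $\pi_K \mid f(x)$ in $\mathcal{O}_K[[x]]$, then $\pi_K^2 \mid T(f)$. -/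

import Mathlib

/-!
Write `e` for `π_K`. Every summand `f(x ⊕_K z)` is divisible by `e`, and on series divisible
by `e` the Lubin–Tate sum agrees with the ordinary sum modulo `e²`, since
`F_L(x, y) ≡ x + y` up to terms of degree `≥ 2`. Coefficientwise and to any `ϖ`-adic precision,
the ordinary sum `∑_z f(x ⊕_K z)` is `∑_z P(z)` for a polynomial `P ∈ e·A[Y]`; the roots `z` of
`e x + x^{q_K}` have all power sums divisible by `e` (Newton's identities, together with
`e ∣ q_K` for the zeroth one), so this sum is divisible by `e²`. Finally `e² ∣ α` and
`e² ∣ f^k` for `k ≥ 2` make `[α]_L(f([π_K]_K(x)))`, its `F_L`-inverse, and hence `T(f)`,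
divisible by `e²`.
-/

open PowerSeries Finset

noncomputable section

namespace Coleman

variable {R : Type*} [CommRing R]

/-- The coefficient of `x^i y^j` in a two-variable power series. -/
def mcoeff (R : Type*) [CommRing R] (i j : ℕ) (F : MvPowerSeries (Fin 2) R) : R :=
  MvPowerSeries.coeff (Finsupp.single 0 i + Finsupp.single 1 j) F

/-- Exact composition `g(h)`; this is the correct composite when `h` has zero constant term. -/
def pcomp (g h : R⟦X⟧) : R⟦X⟧ :=
  PowerSeries.mk fun n => ∑ k ∈ range (n + 1), coeff k g * coeff n (h ^ k)

/-- Exact substitution `F(a,b)`; correct when `a`, `b` have zero constant term. -/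
def pcomp2 (F : MvPowerSeries (Fin 2) R) (a b : R⟦X⟧) : R⟦X⟧ :=
  PowerSeries.mk fun n => ∑ i ∈ range (n + 1), ∑ j ∈ range (n + 1),
    mcoeff R i j F * coeff n (a ^ i * b ^ j)

/-- Total degree of a bi-exponent. -/
def mdeg (d : Fin 2 →₀ ℕ) : ℕ := d 0 + d 1

/-- `g(F)` for a two-variable `F` with zero constant term. -/
def mcomp1 (g : R⟦X⟧) (F : MvPowerSeries (Fin 2) R) : MvPowerSeries (Fin 2) R :=
  fun d => ∑ k ∈ range (mdeg d + 1), coeff k g * MvPowerSeries.coeff d (F ^ k)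

/-- `F(A,B)` for two-variable `A`, `B` with zero constant term. -/
def mcomp2 (F A B : MvPowerSeries (Fin 2) R) : MvPowerSeries (Fin 2) R :=
  fun d => ∑ i ∈ range (mdeg d + 1), ∑ j ∈ range (mdeg d + 1),
    mcoeff R i j F * MvPowerSeries.coeff d (A ^ i * B ^ j)

/-- The one-variable series `g` viewed as a series in the variable `i` only. -/
def embedVar (i : Fin 2) (g : R⟦X⟧) : MvPowerSeries (Fin 2) R :=
  fun d => if d = Finsupp.single i (d i) then coeff (d i) g else 0

/-- `S = g(a)`, where the substitution is understood as a `t`-adic (coefficientwise) limit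
of the partial sums `∑_{k<M} g_k a^k`. -/
def IsSubst (t : R) (g a S : R⟦X⟧) : Prop :=
  ∀ n N : ℕ, ∃ M₀ : ℕ, ∀ M ≥ M₀,
    t ^ N ∣ (coeff n S - ∑ k ∈ range M, coeff k g * coeff n (a ^ k))

/-- `S = F(a,b)`, as a `t`-adic coefficientwise limit of partial sums. -/
def IsSubst2 (t : R) (F : MvPowerSeries (Fin 2) R) (a b S : R⟦X⟧) : Prop :=
  ∀ n N : ℕ, ∃ M₀ : ℕ, ∀ M ≥ M₀,
    t ^ N ∣ (coeff n S - ∑ i ∈ range M, ∑ j ∈ range M,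
      mcoeff R i j F * coeff n (a ^ i * b ^ j))

/-- `S` is the formal-group (`F`-) sum of the list `l` of power series. -/
def IsLTSum (t : R) (F : MvPowerSeries (Fin 2) R) : List R⟦X⟧ → R⟦X⟧ → Prop
  | [], S => S = 0
  | a :: l, S => ∃ T, IsLTSum t F l T ∧ IsSubst2 t F a T S

/-- `v = g(u)`, as a `t`-adic limit of partial sums. -/
def IsEvalAt (t : R) (g : R⟦X⟧) (u v : R) : Prop :=
  ∀ N : ℕ, ∃ M₀, ∀ M ≥ M₀, t ^ N ∣ (v - ∑ k ∈ range M, coeff k g * u ^ k)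

/-- `w = F(u,v)`, as a `t`-adic limit of partial sums. -/
def IsEval2At (t : R) (F : MvPowerSeries (Fin 2) R) (u v w : R) : Prop :=
  ∀ N : ℕ, ∃ M₀, ∀ M ≥ M₀,
    t ^ N ∣ (w - ∑ i ∈ range M, ∑ j ∈ range M, mcoeff R i j F * u ^ i * v ^ j)

/-- `F` is a (one-dimensional, commutative) formal group law. -/
structure IsFGL (F : MvPowerSeries (Fin 2) R) : Prop where
  unitX : ∀ n, mcoeff R n 0 F = if n = 1 then 1 else 0
  unitY : ∀ n, mcoeff R 0 n F = if n = 1 then 1 else 0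
  comm : ∀ i j, mcoeff R i j F = mcoeff R j i F

/-- `f` is a Lubin-Tate series for the uniformizer `π` and residue cardinality `q`:
`f ≡ πx mod x²` and `f ≡ x^q mod π`. -/
structure IsLT (π : R) (q : ℕ) (f : R⟦X⟧) : Prop where
  const : constantCoeff f = 0
  lin : coeff 1 f = π
  frob : ∀ n, π ∣ (coeff n f - if n = q then 1 else 0)

/-- `F` is the Lubin-Tate formal group law attached to `f`:
`F ≡ x + y mod deg 2` and `f(F(x,y)) = F(f(x),f(y))`. -/
structure IsLTFGL (π : R) (q : ℕ) (f : R⟦X⟧) (F : MvPowerSeries (Fin 2) R) : Prop where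
  isFGL : IsFGL F
  isLT : IsLT π q f
  commf : mcomp1 f F = mcomp2 F (embedVar 0 f) (embedVar 1 f)

/-- `g = [a]`, the Lubin-Tate endomorphism attached to `a`: `g ≡ a x mod x²` and `f∘g = g∘f`. -/
structure IsBracket (f : R⟦X⟧) (a : R) (g : R⟦X⟧) : Prop where
  const : constantCoeff g = 0
  lin : coeff 1 g = a
  commf : pcomp f g = pcomp g f

/-- Every coefficient of `f` is divisible by `c`. -/
def DvdAll (c : R) (f : R⟦X⟧) : Prop := ∀ n, c ∣ coeff n f


section Rel

variable {OK A : Type*} [CommRing OK] [CommRing A] [Algebra OK A]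

/-- `Rr i = r(x ⊕_K z_i)`: there are series `B i = F_K(x, z_i)` (substitution of the constant
`z_i` into the second variable of `F_K`, as an adic limit) with `Rr i = r(B i)` (again as an
adic limit, since `B i` has nonzero small constant term). -/
def IsOplusList (ϖ : A) (FKm : MvPowerSeries (Fin 2) A) {q : ℕ} (zs : Fin q → A)
    (r : OK⟦X⟧) (Rr : Fin q → A⟦X⟧) : Prop :=
  ∃ B : Fin q → A⟦X⟧,
    (∀ i, IsSubst2 ϖ FKm X (PowerSeries.C (zs i)) (B i)) ∧
    ∀ i, IsSubst ϖ (PowerSeries.map (algebraMap OK A) r) (B i) (Rr i)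

/-- `r ∈ 𝒜^α_{L,K}`: `|r(0)| < 1` and
`∑^{LT,L}_{z ∈ 𝔉₀(F_K)} r(x ⊕_K z) = [α]_L(r([π_K]_K(x)))`, where `bα` is (the image in
`A⟦x⟧` of) the endomorphism `[α]_L` and `fK = [π_K]_K`. -/
def MemA (ϖ : A) (FLm FKm : MvPowerSeries (Fin 2) A) {q : ℕ} (zs : Fin q → A)
    (fK : OK⟦X⟧) (bα : A⟦X⟧) (πK : OK) (r : OK⟦X⟧) : Prop :=
  πK ∣ constantCoeff r ∧
  ∃ (Rr : Fin q → A⟦X⟧) (S RHS : A⟦X⟧),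
    IsOplusList ϖ FKm zs r Rr ∧
    IsLTSum ϖ FLm (List.ofFn Rr) S ∧
    IsSubst ϖ bα (PowerSeries.map (algebraMap OK A) (pcomp r fK)) RHS ∧
    S = RHS

/-- `h ∈ 𝒟_{L,K}`: `∑^{LT,L}_{z ∈ 𝔉₀(F_K)} h(x ⊕_K z) = 0`. -/
def MemD (ϖ : A) (FLm FKm : MvPowerSeries (Fin 2) A) {q : ℕ} (zs : Fin q → A)
    (h : OK⟦X⟧) : Prop :=
  ∃ (Rh : Fin q → A⟦X⟧) (S : A⟦X⟧),
    IsOplusList ϖ FKm zs h Rh ∧ IsLTSum ϖ FLm (List.ofFn Rh) S ∧ S = 0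

/-- `φr = φ^α_{L,K}(r) = [q_K/α]_L(r(x)) ⊖_L r([π_K]_K(x))`, where `bq` is (the image of)
`[q_K/α]_L` and `ιm` (the image of) the formal inverse series of `F_L`. -/
def IsPhi (ϖ : A) (FLm : MvPowerSeries (Fin 2) A) (fK : OK⟦X⟧) (bq ιm : A⟦X⟧)
    (r : OK⟦X⟧) (φr : A⟦X⟧) : Prop :=
  ∃ a m : A⟦X⟧,
    IsSubst ϖ bq (PowerSeries.map (algebraMap OK A) r) a ∧
    IsSubst ϖ ιm (PowerSeries.map (algebraMap OK A) (pcomp r fK)) m ∧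
    IsSubst2 ϖ FLm a m φr

/-- `T = 𝓛_{F_K}(g)`, Coleman's trace operator:
`T([π_K]_K(x)) = ∑_{z ∈ 𝔉₀(F_K)} g(x ⊕_K z)` (ordinary sum). -/
def IsTraceOf (ϖ : A) (FKm : MvPowerSeries (Fin 2) A) {q : ℕ} (zs : Fin q → A)
    (fK : OK⟦X⟧) (g T : OK⟦X⟧) : Prop :=
  ∃ Rg : Fin q → A⟦X⟧, IsOplusList ϖ FKm zs g Rg ∧
    PowerSeries.map (algebraMap OK A) (pcomp T fK) = ∑ i, Rg i

end Rel

section T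

variable {OK A : Type*} [CommRing OK] [CommRing A] [Algebra OK A]

/-- `Tf = T(f) = (∑^{LT,L}_{z ∈ 𝔉₀(F_K)} f(x ⊕_K z)) ⊖_L [α]_L(f([π_K]_K(x)))`,
where `bα` is (the image of) `[α]_L` and `ι` (the image of) the formal inverse of `F_L`. -/
def IsT (ϖ : A) (FLm FKm : MvPowerSeries (Fin 2) A) {q : ℕ} (zs : Fin q → A)
    (fK : OK⟦X⟧) (bα ι : A⟦X⟧) (f : OK⟦X⟧) (Tf : A⟦X⟧) : Prop :=
  ∃ (Rf : Fin q → A⟦X⟧) (S aR m : A⟦X⟧),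
    IsOplusList ϖ FKm zs f Rf ∧
    IsLTSum ϖ FLm (List.ofFn Rf) S ∧
    IsSubst ϖ bα (PowerSeries.map (algebraMap OK A) (pcomp f fK)) aR ∧
    IsSubst ϖ ι aR m ∧
    IsSubst2 ϖ FLm S m Tf

end T

section Divisibility

variable {A : Type*} [CommRing A]

theorem dvdAll_iff_C_dvd {c : A} {f : A⟦X⟧} : DvdAll c f ↔ C c ∣ f := by
  refine ⟨fun h => ?_, fun ⟨g, hg⟩ n => by simp [hg, coeff_C_mul]⟩
  choose g hg using h
  exact ⟨PowerSeries.mk g, ext fun n => by simp [coeff_C_mul, hg n]⟩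

theorem coeff_dvd_of_C_dvd {c : A} {f : A⟦X⟧} (h : C c ∣ f) (n : ℕ) : c ∣ coeff n f :=
  dvdAll_iff_C_dvd.2 h n

theorem eq_zero_of_forall_pow_dvd [IsDomain A] [IsNoetherianRing A] {ϖ x : A}
    (hϖ : ¬IsUnit ϖ) (h : ∀ N, ϖ ^ N ∣ x) : x = 0 := by
  have hbot := Ideal.iInf_pow_eq_bot_of_isDomain (I := Ideal.span {ϖ})
    (by rwa [Ne, Ideal.span_singleton_eq_top])
  rw [← Ideal.mem_bot, ← hbot, Ideal.mem_iInf]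
  intro N
  rw [Ideal.span_singleton_pow, Ideal.mem_span_singleton]
  exact h N

theorem exists_dvd_pow_of_ne_zero [IsDomain A] [IsDiscreteValuationRing A] {ϖ e : A}
    (hϖ : Irreducible ϖ) (he : e ≠ 0) : ∃ N, e ∣ ϖ ^ N := by
  obtain ⟨N, u, rfl⟩ := IsDiscreteValuationRing.eq_unit_mul_pow_irreducible he hϖ
  exact ⟨N, Units.mul_left_dvd.2 dvd_rfl⟩

theorem coeff_pow_sub_pow_dvd {B β : A⟦X⟧} {w : A} {n : ℕ}
    (h : ∀ m ≤ n, w ∣ coeff m (B - β)) (k : ℕ) : w ∣ coeff n (B ^ k - β ^ k) := by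
  obtain ⟨g, hg⟩ := sub_dvd_pow_sub_pow B β k
  rw [hg, coeff_mul]
  exact Finset.dvd_sum fun p hp =>
    (h p.1 (Finset.HasAntidiagonal.antidiagonal.fst_le hp)).mul_right _

theorem C_dvd_map {R S : Type*} [CommRing R] [CommRing S] (φ : R →+* S) {c : R} {f : R⟦X⟧}
    (h : C c ∣ f) : C (φ c) ∣ map φ f := by
  simpa using map_dvd (map φ) h

theorem C_dvd_pcomp {R : Type*} [CommRing R] {c : R} {g : R⟦X⟧} (hg : C c ∣ g) (h : R⟦X⟧) :
    C c ∣ pcomp g h :=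
  dvdAll_iff_C_dvd.1 fun n => by
    rw [pcomp, coeff_mk]
    exact Finset.dvd_sum fun k _ => (coeff_dvd_of_C_dvd hg k).mul_right _

theorem IsEvalAt.eq_eval {A : Type*} [CommRing A] [IsDomain A] [IsNoetherianRing A] {ϖ : A}
    (hϖ : ¬IsUnit ϖ) {p : Polynomial A} {u v : A} (h : IsEvalAt ϖ (p : A⟦X⟧) u v) :
    v = p.eval u := by
  refine sub_eq_zero.1 (eq_zero_of_forall_pow_dvd hϖ fun N => ?_)
  obtain ⟨M₀, hM⟩ := h N
  rw [Polynomial.eval_eq_sum_range' (by omega : p.natDegree < max M₀ (p.natDegree + 1))]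
  simpa using hM _ (le_max_left _ _)

end Divisibility

section PowerSums

variable {A : Type*} [CommRing A] {e : A}

theorem dvd_esymm_of_dvd_coeff_prod {s : Multiset A}
    (h : ∀ k < Multiset.card s,
      e ∣ (s.map fun a => Polynomial.X - Polynomial.C a).prod.coeff k) {a : ℕ} (ha : 0 < a) :
    e ∣ s.esymm a := by
  by_cases has : a ≤ Multiset.card s
  · have hcoeff := h (Multiset.card s - a) (by omega)
    rw [Multiset.prod_X_sub_C_coeff s (Nat.sub_le _ _), Nat.sub_sub_self has] at hcoeff
    exact (IsUnit.dvd_mul_left ((isUnit_neg_one).pow a)).1 hcoeff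
  · simp [Multiset.esymm, Multiset.powersetCard_eq_empty a (not_le.1 has)]

open MvPolynomial in
theorem dvd_sum_pow_of_dvd_esymm {σ : Type*} [Fintype σ] [DecidableEq σ] (z : σ → A)
    (h : ∀ a, 0 < a → e ∣ (Finset.univ.val.map z).esymm a) {k : ℕ} (hk : 0 < k) :
    e ∣ ∑ i, z i ^ k := by
  have newton := congrArg (aeval z) (psum_eq_mul_esymm_sub_sum σ A k hk)
  simp only [psum, map_sub, map_mul, map_sum, map_pow, map_neg, map_one, map_natCast, aeval_X,
    aeval_esymm_eq_multiset_esymm] at newton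
  rw [newton]
  refine dvd_sub ((h k hk).mul_left _) (Finset.dvd_sum fun a ha => ?_)
  rw [Finset.mem_filter] at ha
  exact ((h a.1 ha.2.1).mul_left _).mul_right _

theorem prod_X_sub_C_eq_of_isRoot [IsDomain A] {σ : Type*} [Fintype σ] {p : Polynomial A}
    (hp : p.Monic) (hdeg : p.natDegree = Fintype.card σ) {z : σ → A}
    (hz : Function.Injective z) (hroot : ∀ i, p.IsRoot (z i)) :
    ∏ i, (Polynomial.X - Polynomial.C (z i)) = p := by
  rw [← Lagrange.nodal_eq]
  refine Polynomial.eq_of_degree_sub_lt_of_eval_index_eq (s := Finset.univ) hz.injOn ?_ ?_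
  · rw [← Lagrange.degree_nodal (v := z)]
    refine Polynomial.degree_sub_lt_left ?_ Lagrange.nodal_ne_zero ?_
    · rw [Lagrange.degree_nodal, Polynomial.degree_eq_natDegree hp.ne_zero, hdeg,
        Finset.card_univ]
    · rw [Lagrange.nodal_monic.leadingCoeff, hp.leadingCoeff]
  · intro i _
    rw [Lagrange.eval_nodal_at_node (Finset.mem_univ i), (hroot i).eq_zero]

theorem dvd_sum_pow_of_isRoot [IsDomain A] {σ : Type*} [Fintype σ] {p : Polynomial A}
    (hp : p.Monic) (hdeg : p.natDegree = Fintype.card σ)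
    (hcoeff : ∀ k < Fintype.card σ, e ∣ p.coeff k) {z : σ → A} (hz : Function.Injective z)
    (hroot : ∀ i, p.IsRoot (z i)) {k : ℕ} (hk : 0 < k) : e ∣ ∑ i, z i ^ k := by
  classical
  have hprod :
      ((Finset.univ.val.map z).map fun a => Polynomial.X - Polynomial.C a).prod = p := by
    rw [Multiset.map_map, ← prod_X_sub_C_eq_of_isRoot hp hdeg hz hroot]
    rfl
  refine dvd_sum_pow_of_dvd_esymm z (fun a ha => ?_) hk
  refine dvd_esymm_of_dvd_coeff_prod (fun j hj => ?_) ha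
  rw [hprod]
  exact hcoeff j (by simpa using hj)

theorem dvd_sum_pow_of_isRoot_X_pow_add_C_mul_X [IsDomain A] {q : ℕ} (hq : 2 ≤ q)
    {z : Fin q → A} (hz : Function.Injective z)
    (hroot : ∀ i, (Polynomial.X ^ q + Polynomial.C e * Polynomial.X).IsRoot (z i)) {k : ℕ}
    (hk : 0 < k) : e ∣ ∑ i, z i ^ k := by
  have hlow : (Polynomial.C e * Polynomial.X).degree < (q : WithBot ℕ) :=
    (Polynomial.degree_C_mul_X_le e).trans_lt (by exact_mod_cast (by omega : 1 < q))
  refine dvd_sum_pow_of_isRoot (Polynomial.monic_X_pow_add hlow) ?_ (fun j hj => ?_) hz hroot hk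
  · rw [Polynomial.natDegree_add_eq_left_of_degree_lt (by rwa [Polynomial.degree_X_pow]),
      Polynomial.natDegree_X_pow, Fintype.card_fin]
  · rw [Fintype.card_fin] at hj
    simp only [Polynomial.coeff_add, Polynomial.coeff_X_pow, hj.ne, if_false, zero_add,
      Polynomial.coeff_C_mul]
    exact dvd_mul_right e _

end PowerSums

section Substitution

variable {R : Type*} [CommRing R]

def partialSubst (g a : R⟦X⟧) (M : ℕ) : R⟦X⟧ := ∑ k ∈ range M, C (coeff k g) * a ^ k

def partialSubst2 (F : MvPowerSeries (Fin 2) R) (a b : R⟦X⟧) (M : ℕ) : R⟦X⟧ :=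
  ∑ i ∈ range M, ∑ j ∈ range M, C (mcoeff R i j F) * (a ^ i * b ^ j)

theorem map_partialSubst {S : Type*} [CommRing S] (φ : R →+* S) (g a : R⟦X⟧) (M : ℕ) :
    map φ (partialSubst g a M) = partialSubst (map φ g) (map φ a) M := by
  simp [partialSubst]

theorem mcoeff_map {S : Type*} [CommRing S] (φ : R →+* S) (F : MvPowerSeries (Fin 2) R)
    (i j : ℕ) : mcoeff S i j (MvPowerSeries.map φ F) = φ (mcoeff R i j F) := by
  simp [mcoeff, MvPowerSeries.coeff_map]

variable {t d : R} {N : ℕ}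

theorem IsSubst.eventually_dvd {g a S : R⟦X⟧} (h : IsSubst t g a S) (n N : ℕ) :
    ∀ᶠ M in Filter.atTop, t ^ N ∣ coeff n (S - partialSubst g a M) := by
  simpa [partialSubst, map_sum, coeff_C_mul] using Filter.eventually_atTop.2 (h n N)

theorem IsSubst2.eventually_dvd {F : MvPowerSeries (Fin 2) R} {a b S : R⟦X⟧}
    (h : IsSubst2 t F a b S) (n N : ℕ) :
    ∀ᶠ M in Filter.atTop, t ^ N ∣ coeff n (S - partialSubst2 F a b M) := by
  simpa [partialSubst2, map_sum, coeff_C_mul] using Filter.eventually_atTop.2 (h n N)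

theorem IsSubst.C_dvd {g a S : R⟦X⟧} (h : IsSubst t g a S) (hd : d ∣ t ^ N)
    (hterm : ∀ k, C d ∣ C (coeff k g) * a ^ k) : C d ∣ S := by
  rw [← dvdAll_iff_C_dvd]
  intro n
  obtain ⟨M, hM⟩ := (h.eventually_dvd n N).exists
  have hpartial : C d ∣ partialSubst g a M := Finset.dvd_sum fun k _ => hterm k
  simpa using dvd_add (hd.trans hM) (coeff_dvd_of_C_dvd hpartial n)

theorem IsSubst2.C_dvd_sub {F : MvPowerSeries (Fin 2) R} {a b S : R⟦X⟧}
    (h : IsSubst2 t F a b S) (hd : d ∣ t ^ N) {c : R⟦X⟧}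
    (hc : ∀ᶠ M in Filter.atTop, C d ∣ partialSubst2 F a b M - c) : C d ∣ S - c := by
  rw [← dvdAll_iff_C_dvd]
  intro n
  obtain ⟨M, hSM, hMc⟩ := ((h.eventually_dvd n N).and hc).exists
  simpa using dvd_add (hd.trans hSM) (coeff_dvd_of_C_dvd hMc n)

theorem IsSubst.C_dvd_of_coeff_zero_eq_zero {g a S : R⟦X⟧} (h : IsSubst t g a S)
    (hd : d ∣ t ^ N) (hg : coeff 0 g = 0) (ha : C d ∣ a) : C d ∣ S :=
  h.C_dvd hd fun
    | 0 => by simp [hg]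
    | k + 1 => (dvd_pow ha k.succ_ne_zero).mul_left _

theorem IsSubst.C_sq_dvd {e : R} {g a S : R⟦X⟧} (h : IsSubst t g a S) (hd : e ^ 2 ∣ t ^ N)
    (hg₀ : coeff 0 g = 0) (hg₁ : e ^ 2 ∣ coeff 1 g) (ha : C e ∣ a) : C (e ^ 2) ∣ S :=
  h.C_dvd hd fun
    | 0 => by simp [hg₀]
    | 1 => (map_dvd C hg₁).mul_right _
    | k + 2 => by
      rw [pow_add, map_pow]
      exact ((pow_dvd_pow_of_dvd ha 2).mul_left _).mul_left _

theorem IsSubst2.C_dvd {F : MvPowerSeries (Fin 2) R} {a b S : R⟦X⟧} (h : IsSubst2 t F a b S)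
    (hd : d ∣ t ^ N) (hF : mcoeff R 0 0 F = 0) (ha : C d ∣ a) (hb : C d ∣ b) : C d ∣ S := by
  have hterm : ∀ i j, C d ∣ C (mcoeff R i j F) * (a ^ i * b ^ j) := fun
    | 0, 0 => by simp [hF]
    | 0, j + 1 => ((dvd_pow hb j.succ_ne_zero).mul_left _).mul_left _
    | i + 1, _ => ((dvd_pow ha i.succ_ne_zero).mul_right _).mul_left _
  simpa using h.C_dvd_sub hd (c := 0) (Filter.Eventually.of_forall fun M =>
    by simpa [partialSubst2] using Finset.dvd_sum fun i _ => Finset.dvd_sum fun j _ => hterm i j)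

end Substitution

section FormalGroupSum

variable {R : Type*} [CommRing R] {F : MvPowerSeries (Fin 2) R} {e t : R} {N : ℕ}
  {a b S : R⟦X⟧}

theorem IsFGL.C_sq_dvd_term_sub (hF : IsFGL F) (ha : C e ∣ a) (hb : C e ∣ b)
    (i j : ℕ) :
    C (e ^ 2) ∣ C (mcoeff R i j F) * (a ^ i * b ^ j) - (if (i, j) = (1, 0) then a else 0)
      - (if (i, j) = (0, 1) then b else 0) :=
  match i, j with
  | 0, 0 => by simp [hF.unitX 0]
  | 1, 0 => by simp [hF.unitX 1]
  | 0, 1 => by simp [hF.unitY 1]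
  | 0, j + 2 => by simp [hF.unitY (j + 2)]
  | i + 2, 0 => by simp [hF.unitX (i + 2)]
  | i + 1, j + 1 => by
    simp only [Prod.mk.injEq, Nat.add_eq_zero_iff, one_ne_zero, and_false, false_and, if_false,
      sub_zero, map_pow]
    exact (pow_two (C e) ▸ mul_dvd_mul (dvd_pow ha i.succ_ne_zero)
      (dvd_pow hb j.succ_ne_zero)).mul_left _

theorem IsSubst2.C_sq_dvd_sub_add (h : IsSubst2 t F a b S) (hF : IsFGL F) (hd : e ^ 2 ∣ t ^ N)
    (ha : C e ∣ a) (hb : C e ∣ b) : C (e ^ 2) ∣ S - (a + b) := by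
  refine h.C_dvd_sub hd (Filter.eventually_atTop.2 ⟨2, fun M hM => ?_⟩)
  have hsplit : partialSubst2 F a b M - (a + b) = ∑ p ∈ range M ×ˢ range M,
      (C (mcoeff R p.1 p.2 F) * (a ^ p.1 * b ^ p.2) - (if p = (1, 0) then a else 0)
        - (if p = (0, 1) then b else 0)) := by
    rw [Finset.sum_sub_distrib, Finset.sum_sub_distrib, Finset.sum_ite_eq', Finset.sum_ite_eq',
      if_pos (by simp; omega), if_pos (by simp; omega), partialSubst2, Finset.sum_product]
    ring
  rw [hsplit]
  exact Finset.dvd_sum fun p _ => hF.C_sq_dvd_term_sub ha hb p.1 p.2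

theorem IsLTSum.C_sq_dvd_sub_sum (hF : IsFGL F) (hd : e ^ 2 ∣ t ^ N) :
    ∀ {l : List R⟦X⟧} {S : R⟦X⟧}, IsLTSum t F l S → (∀ g ∈ l, C e ∣ g) →
      C (e ^ 2) ∣ S - l.sum
  | [], S, h, _ => by simp [show S = 0 from h]
  | a :: l, S, ⟨T, hT, hS⟩, hl => by
    have hTl := hT.C_sq_dvd_sub_sum hF hd fun g hg => hl g (List.mem_cons_of_mem a hg)
    have hle : C e ∣ C (e ^ 2) := map_dvd C (dvd_pow_self e two_ne_zero)
    have hTe : C e ∣ T := by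
      simpa using
        dvd_add (hle.trans hTl) (List.dvd_sum fun g hg => hl g (List.mem_cons_of_mem a hg))
    have hSaT := hS.C_sq_dvd_sub_add hF hd (hl a List.mem_cons_self) hTe
    rw [List.sum_cons]
    simpa [sub_add_eq_sub_sub, sub_sub_sub_cancel_right] using dvd_add hSaT hTl

theorem IsFGL.map {R S : Type*} [CommRing R] [CommRing S] {F : MvPowerSeries (Fin 2) R}
    (hF : IsFGL F) (φ : R →+* S) : IsFGL (MvPowerSeries.map φ F) where
  unitX n := by rw [mcoeff_map, hF.unitX]; split_ifs <;> simp
  unitY n := by rw [mcoeff_map, hF.unitY]; split_ifs <;> simp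
  comm i j := by rw [mcoeff_map, mcoeff_map, hF.comm]

end FormalGroupSum

section Trace

variable {A : Type*} [CommRing A] {σ : Type*}

theorem dvd_sum_eval [Fintype σ] {e : A} {z : σ → A} (hpsum : ∀ j, e ∣ ∑ i, z i ^ j)
    (Q : Polynomial A) : e ∣ ∑ i, Q.eval (z i) := by
  simp only [Polynomial.eval_eq_sum, Polynomial.sum_def]
  rw [Finset.sum_comm]
  exact Finset.dvd_sum fun j _ => by rw [← Finset.mul_sum]; exact (hpsum j).mul_left _

theorem sq_dvd_sum_of_approx [Fintype σ] {ϖ e : A} {N : ℕ} (hN : e ^ 2 ∣ ϖ ^ N) {z : σ → A}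
    (hpsum : ∀ j, e ∣ ∑ i, z i ^ j) {x : σ → A} {P : Polynomial A} (hP : Polynomial.C e ∣ P)
    (hx : ∀ i, ϖ ^ N ∣ x i - P.eval (z i)) : e ^ 2 ∣ ∑ i, x i := by
  obtain ⟨Q, rfl⟩ := hP
  have hQ : e ^ 2 ∣ ∑ i, (Polynomial.C e * Q).eval (z i) := by
    simp only [Polynomial.eval_mul, Polynomial.eval_C, ← Finset.mul_sum, pow_two]
    exact mul_dvd_mul_left e (dvd_sum_eval hpsum Q)
  have hdiff : e ^ 2 ∣ ∑ i, (x i - (Polynomial.C e * Q).eval (z i)) :=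
    Finset.dvd_sum fun i _ => hN.trans (hx i)
  simpa [Finset.sum_sub_distrib] using dvd_add hdiff hQ

theorem exists_polynomial_approx [Finite σ] {t e : A} {F : MvPowerSeries (Fin 2) A}
    {g : A⟦X⟧} {z : σ → A} {B R : σ → A⟦X⟧} (hB : ∀ i, IsSubst2 t F X (C (z i)) (B i))
    (hR : ∀ i, IsSubst t g (B i) (R i)) (hg : C e ∣ g) (n N : ℕ) :
    ∃ P : Polynomial A, Polynomial.C e ∣ P ∧ ∀ i, t ^ N ∣ coeff n (R i) - P.eval (z i) := by
  obtain ⟨M, hRM, hBM⟩ := ((Filter.eventually_all.2 fun i => (hR i).eventually_dvd n N).and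
    (Filter.eventually_all.2 fun i =>
      Filter.eventually_all.2 fun m : Fin (n + 1) => (hB i).eventually_dvd m N)).exists
  -- the truncation of `F(X, Y)`, with coefficients in `A[Y]`
  set G : (Polynomial A)⟦X⟧ :=
    partialSubst2 (MvPowerSeries.map Polynomial.C F) X (C Polynomial.X) M
  have hG : ∀ i,
      PowerSeries.map (Polynomial.evalRingHom (z i)) G = partialSubst2 F X (C (z i)) M := by
    intro i
    simp [G, partialSubst2, mcoeff_map]
  have hgC : C (Polynomial.C e) ∣ PowerSeries.map Polynomial.C g := by
    simpa using map_dvd (PowerSeries.map Polynomial.C) hg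
  refine ⟨coeff n (partialSubst (PowerSeries.map Polynomial.C g) G M),
    coeff_dvd_of_C_dvd (Finset.dvd_sum fun k _ =>
      (map_dvd C (coeff_dvd_of_C_dvd hgC k)).mul_right _) n, fun i => ?_⟩
  set β := partialSubst2 F X (C (z i)) M
  have heval : (coeff n (partialSubst (PowerSeries.map Polynomial.C g) G M)).eval (z i)
      = coeff n (partialSubst g β M) := by
    rw [← Polynomial.coe_evalRingHom, ← coeff_map, map_partialSubst, hG]
    congr 3
    ext k
    simp
  have hsplit : coeff n (R i) - coeff n (partialSubst g β M) =
      coeff n (R i - partialSubst g (B i) M) +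
        ∑ k ∈ range M, coeff k g * coeff n (B i ^ k - β ^ k) := by
    simp only [partialSubst, map_sub, map_sum, coeff_C_mul, mul_sub, Finset.sum_sub_distrib]
    ring
  rw [heval, hsplit]
  exact dvd_add (hRM i) (Finset.dvd_sum fun k _ =>
    (coeff_pow_sub_pow_dvd (fun m hm => hBM i ⟨m, by omega⟩) k).mul_left _)

end Trace

section OplusList

variable {OK A : Type*} [CommRing OK] [CommRing A] [Algebra OK A] {ϖ : A}
  {FKm : MvPowerSeries (Fin 2) A} {q : ℕ} {zs : Fin q → A} {r : OK⟦X⟧} {Rr : Fin q → A⟦X⟧}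
  {c : OK} {N : ℕ}

theorem IsOplusList.C_dvd (h : IsOplusList ϖ FKm zs r Rr) (hr : C c ∣ r)
    (hN : algebraMap OK A c ∣ ϖ ^ N) (i : Fin q) : C (algebraMap OK A c) ∣ Rr i := by
  obtain ⟨B, -, hR⟩ := h
  exact (hR i).C_dvd hN fun k =>
    (map_dvd C (coeff_dvd_of_C_dvd (C_dvd_map (algebraMap OK A) hr) k)).mul_right _

theorem IsOplusList.C_sq_dvd_sum (h : IsOplusList ϖ FKm zs r Rr) (hr : C c ∣ r)
    (hN : algebraMap OK A c ^ 2 ∣ ϖ ^ N) (hpsum : ∀ j, algebraMap OK A c ∣ ∑ i, zs i ^ j) :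
    C (algebraMap OK A c ^ 2) ∣ ∑ i, Rr i := by
  obtain ⟨B, hB, hR⟩ := h
  rw [← dvdAll_iff_C_dvd]
  intro n
  obtain ⟨P, hP, hPR⟩ := exists_polynomial_approx hB hR (C_dvd_map (algebraMap OK A) hr) n N
  simpa [map_sum] using sq_dvd_sum_of_approx hN hpsum hP hPR

end OplusList

theorem stmt16_general
    {OL OK A : Type*} [CommRing OL]
    [CommRing OK]
    [CommRing A] [IsDomain A] [IsDiscreteValuationRing A]
    [Algebra OL OK] [Algebra OK A] [Algebra OL A] [IsScalarTower OL OK A]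
    (hinj2 : Function.Injective (algebraMap OK A))
    (πL : OL) (πK : OK) (hπK : Irreducible πK)
    (ϖ : A) (hϖ : Irreducible ϖ)
    (qL qK : ℕ) (hqK : 2 ≤ qK)
    (fL : OL⟦X⟧) (FL : MvPowerSeries (Fin 2) OL) (hFL : IsLTFGL πL qL fL FL)
    (fK : OK⟦X⟧) (FK : MvPowerSeries (Fin 2) OK)
    -- the roots `𝔉₀(F_K)` of `f_K` (including `0`), inside the maximal ideal of `A`
    (zs : Fin qK → A)
    (hzroot : ∀ i, IsEvalAt ϖ (PowerSeries.map (algebraMap OK A) fK) (zs i) 0)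
    (hzinj : Function.Injective zs)
    (hfK : fK = PowerSeries.C πK * X + X ^ qK)
    (hram : πK ^ 2 ∣ algebraMap OL OK πL)
    (fKL : ℕ)
    (α : OL) (hα : α * πL ^ fKL = (qK : OL)) (hπα : πL ∣ α)
    (bα : OL⟦X⟧) (hbα : IsBracket fL α bα)
    (ι : OL⟦X⟧) (hι0 : constantCoeff ι = 0)
    (f : OK⟦X⟧) (hfdvd : DvdAll πK f)
    (Tf : A⟦X⟧)
    (hTf : IsT ϖ (MvPowerSeries.map (σ := Fin 2) (algebraMap OL A) FL)
      (MvPowerSeries.map (σ := Fin 2) (algebraMap OK A) FK) zs fK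
      (PowerSeries.map (algebraMap OL A) bα) (PowerSeries.map (algebraMap OL A) ι) f Tf) :
    DvdAll (algebraMap OK A πK ^ 2) Tf := by
  set e := algebraMap OK A πK
  obtain ⟨N, hN⟩ := exists_dvd_pow_of_ne_zero hϖ
    (pow_ne_zero 2 ((map_ne_zero_iff _ hinj2).2 hπK.ne_zero))
  have hf : C πK ∣ f := dvdAll_iff_C_dvd.1 hfdvd
  have hαe : e ^ 2 ∣ algebraMap OL A α := by
    rw [IsScalarTower.algebraMap_apply OL OK A]
    simpa [e] using map_dvd (algebraMap OK A) (hram.trans (map_dvd _ hπα))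
  have hqe : e ∣ (qK : A) := by
    rw [← map_natCast (algebraMap OL A), ← hα, map_mul]
    exact (dvd_pow_self e two_ne_zero).trans (hαe.mul_right _)
  have hfKA : map (algebraMap OK A) fK =
      ((Polynomial.X ^ qK + Polynomial.C e * Polynomial.X : Polynomial A) : A⟦X⟧) := by
    simp [hfK, e, add_comm]
  have hpsum : ∀ j, e ∣ ∑ i, zs i ^ j
    | 0 => by simpa using hqe
    | j + 1 => dvd_sum_pow_of_isRoot_X_pow_add_C_mul_X hqK hzinj
        (fun i => ((hfKA ▸ hzroot i).eq_eval hϖ.not_isUnit).symm) j.succ_pos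
  obtain ⟨Rf, S, aR, m, hRf, hS, haR, hm, hTf⟩ := hTf
  have hSe : C (e ^ 2) ∣ S := by
    have hSsum := hS.C_sq_dvd_sub_sum (hFL.isFGL.map _) hN fun g hg => by
      obtain ⟨i, rfl⟩ := List.mem_ofFn.1 hg
      exact hRf.C_dvd hf ((dvd_pow_self e two_ne_zero).trans hN) i
    simpa [List.sum_ofFn] using dvd_add hSsum (hRf.C_sq_dvd_sum hf hN hpsum)
  have haRe : C (e ^ 2) ∣ aR :=
    haR.C_sq_dvd hN (by simp [coeff_zero_eq_constantCoeff_apply, hbα.const])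
      (by rwa [coeff_map, hbα.lin]) (C_dvd_map _ (C_dvd_pcomp hf fK))
  have hme : C (e ^ 2) ∣ m :=
    hm.C_dvd_of_coeff_zero_eq_zero hN (by simp [coeff_zero_eq_constantCoeff_apply, hι0]) haRe
  rw [dvdAll_iff_C_dvd]
  exact hTf.C_dvd hN (by simp [mcoeff_map, hFL.isFGL.unitX 0]) hSe hme

/-- **Lemma 2.1.3.** With `f_L(x) = π_L x + x^{q_L}`,
`f_K(x) = π_K x + x^{q_K}`, `q_L ≥ 3`, `π_K² ∣ π_L` and `π_L ∣ α = q_K/π_L^{f_{K/L}}`: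
if `π_K ∣ f(x)` in `O_K⟦x⟧`, then `π_K² ∣ T(f)`, where
`T(f) = (∑^{LT,L}_{z ∈ 𝔉₀(F_K)} f(x ⊕_K z)) ⊖_L [α]_L(f([π_K]_K(x)))`. -/
theorem stmt16
    {OL OK A : Type*} [CommRing OL] [IsDomain OL] [IsDiscreteValuationRing OL]
    [CommRing OK] [IsDomain OK] [IsDiscreteValuationRing OK]
    [CommRing A] [IsDomain A] [IsDiscreteValuationRing A]
    [Algebra OL OK] [Algebra OK A] [Algebra OL A] [IsScalarTower OL OK A]
    (hinj1 : Function.Injective (algebraMap OL OK))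
    (hinj2 : Function.Injective (algebraMap OK A))
    (πL : OL) (hπL : Irreducible πL) (πK : OK) (hπK : Irreducible πK)
    (ϖ : A) (hϖ : Irreducible ϖ) [IsAdicComplete (Ideal.span {ϖ}) A]
    (qL qK : ℕ) (hqL : 2 ≤ qL) (hqK : 2 ≤ qK)
    (fL : OL⟦X⟧) (FL : MvPowerSeries (Fin 2) OL) (hFL : IsLTFGL πL qL fL FL)
    (fK : OK⟦X⟧) (FK : MvPowerSeries (Fin 2) OK) (hFK : IsLTFGL πK qK fK FK)
    -- the roots `𝔉₀(F_K)` of `f_K` (including `0`), inside the maximal ideal of `A`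
    (zs : Fin qK → A) (hz0 : ∃ i, zs i = 0)
    (hzroot : ∀ i, IsEvalAt ϖ (PowerSeries.map (algebraMap OK A) fK) (zs i) 0)
    (hzinj : Function.Injective zs) (hzmax : ∀ i, ϖ ∣ zs i)
    (hqL3 : 3 ≤ qL)
    (hfL : fL = PowerSeries.C πL * X + X ^ qL)
    (hfK : fK = PowerSeries.C πK * X + X ^ qK)
    (hram : πK ^ 2 ∣ algebraMap OL OK πL)
    (fKL : ℕ) (hfKL : qK = qL ^ fKL)
    (α : OL) (hα : α * πL ^ fKL = (qK : OL)) (hπα : πL ∣ α)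
    (bα : OL⟦X⟧) (hbα : IsBracket fL α bα)
    (ι : OL⟦X⟧) (hι0 : constantCoeff ι = 0) (hι : pcomp2 FL X ι = 0)
    (f : OK⟦X⟧) (hf0 : πK ∣ constantCoeff f) (hfdvd : DvdAll πK f)
    (Tf : A⟦X⟧)
    (hTf : IsT ϖ (MvPowerSeries.map (σ := Fin 2) (algebraMap OL A) FL)
      (MvPowerSeries.map (σ := Fin 2) (algebraMap OK A) FK) zs fK
      (PowerSeries.map (algebraMap OL A) bα) (PowerSeries.map (algebraMap OL A) ι) f Tf) :
    DvdAll (algebraMap OK A πK ^ 2) Tf :=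
  stmt16_general hinj2 πL πK hπK ϖ hϖ qL qK hqK fL FL hFL fK FK zs hzroot hzinj hfK hram fKL α hα
    hπα bα hbα ι hι0 f hfdvd Tf hTf

end Coleman
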